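/- Let V be a vertex set with edge set E, and let B1, B2 be finite subsets of V that are freely joined over A = B1 ∩ B2, with A strong in B1. Then: (i) B2 is strong in B1 ∪ B2; and (ii) if δ(X) ≥ 0 for every X ⊆ B1 and every X ⊆ B2, then δ(X) ≥ 0 for every X ⊆ B1 ∪ B2. -/
import Mathlib


variable {V : Type*}

/-- Predimension of a finite set `A` in the hypergraph with edge set `E`:
`δ(A) = |A| - #{e ∈ E : e ⊆ A}`. -/
noncomputable def hdelta (E : Set (Finset V)) (A : Finset V) : ℤ :=
  (A.card : ℤ) - ({e : Finset V | e ∈ E ∧ e ⊆ A}).ncard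

/-- `A` is strong (self-sufficient) in `C`: `A ⊆ C` and `δ(A) ≤ δ(X)` for every
finite `X` with `A ⊆ X ⊆ C`. -/
def Strong (E : Set (Finset V)) (A : Finset V) (C : Set V) : Prop :=
  (↑A : Set V) ⊆ C ∧
    ∀ X : Finset V, A ⊆ X → (↑X : Set V) ⊆ C → hdelta E A ≤ hdelta E X

/-- `B` is simply algebraic over `A`. -/
def SimplyAlg [DecidableEq V] (E : Set (Finset V)) (A B : Finset V) : Prop :=
  B.Nonempty ∧ A ∩ B = ∅ ∧ Strong E A (↑(A ∪ B) : Set V) ∧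
    hdelta E (A ∪ B) - hdelta E A = 0 ∧
    ∀ B' : Finset V, B' ⊆ B → B' ≠ B → B'.Nonempty →
      hdelta E (A ∪ B') - hdelta E A ≠ 0

/-- `B` is minimally simply algebraic over `A`. -/
def MinSimplyAlg [DecidableEq V] (E : Set (Finset V)) (A B : Finset V) : Prop :=
  SimplyAlg E A B ∧ ∀ A' : Finset V, A' ⊆ A → A' ≠ A → ¬ SimplyAlg E A' B

/-- `B1` and `B2` are freely joined over `A = B1 ∩ B2`. -/
def FreelyJoined (E : Set (Finset V)) (B1 B2 : Set V) : Prop :=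
  ∀ e ∈ E, (↑e : Set V) ⊆ B1 ∪ B2 → (↑e : Set V) ⊆ B1 ∨ (↑e : Set V) ⊆ B2

lemma eset_finite (E : Set (Finset V)) (A : Finset V) :
    ({e : Finset V | e ∈ E ∧ e ⊆ A}).Finite :=
  Set.Finite.subset A.powerset.finite_toSet
    (fun e he => Finset.mem_coe.2 (Finset.mem_powerset.2 he.2))

lemma submod [DecidableEq V] (E : Set (Finset V)) (Y Z : Finset V) :
    hdelta E (Y ∪ Z) + hdelta E (Y ∩ Z) ≤ hdelta E Y + hdelta E Z := by
  have hcard : (Y ∪ Z).card + (Y ∩ Z).card = Y.card + Z.card :=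
    Finset.card_union_add_card_inter Y Z
  have hsub : {e : Finset V | e ∈ E ∧ e ⊆ Y} ∪ {e : Finset V | e ∈ E ∧ e ⊆ Z}
      ⊆ {e : Finset V | e ∈ E ∧ e ⊆ Y ∪ Z} := by
    rintro e (⟨he, hs⟩ | ⟨he, hs⟩)
    · exact ⟨he, hs.trans Finset.subset_union_left⟩
    · exact ⟨he, hs.trans Finset.subset_union_right⟩
  have hint : {e : Finset V | e ∈ E ∧ e ⊆ Y} ∩ {e : Finset V | e ∈ E ∧ e ⊆ Z}
      = {e : Finset V | e ∈ E ∧ e ⊆ Y ∩ Z} := by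
    ext e; simp only [Set.mem_inter_iff, Set.mem_setOf_eq, Finset.subset_inter_iff]; tauto
  have h1 : ({e : Finset V | e ∈ E ∧ e ⊆ Y}).ncard + ({e : Finset V | e ∈ E ∧ e ⊆ Z}).ncard
      ≤ ({e : Finset V | e ∈ E ∧ e ⊆ Y ∪ Z}).ncard
        + ({e : Finset V | e ∈ E ∧ e ⊆ Y ∩ Z}).ncard := by
    rw [← Set.ncard_union_add_ncard_inter _ _ (eset_finite E Y) (eset_finite E Z), hint]
    exact Nat.add_le_add_right (Set.ncard_le_ncard hsub (eset_finite E (Y ∪ Z))) _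
  unfold hdelta
  have h2 := (Nat.cast_le (α := ℤ)).2 h1
  have h3 : ((Y ∪ Z).card : ℤ) + (Y ∩ Z).card = (Y.card : ℤ) + Z.card := by exact_mod_cast hcard
  push_cast at h2 ⊢
  linarith

lemma free_eq [DecidableEq V] (E : Set (Finset V)) (B1 B2 X : Finset V)
    (hfree : FreelyJoined E (↑B1 : Set V) (↑B2 : Set V)) (hX : X ⊆ B1 ∪ B2) :
    hdelta E X + hdelta E (X ∩ B1 ∩ B2) = hdelta E (X ∩ B1) + hdelta E (X ∩ B2) := by
  have hXeq : (X ∩ B1) ∪ (X ∩ B2) = X := by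
    rw [← Finset.inter_union_distrib_left]
    exact Finset.inter_eq_left.2 hX
  have hXint : (X ∩ B1) ∩ (X ∩ B2) = X ∩ B1 ∩ B2 := by
    ext a; simp only [Finset.mem_inter]; tauto
  have hcard : (X.card : ℤ) + (X ∩ B1 ∩ B2).card = ((X ∩ B1).card : ℤ) + (X ∩ B2).card := by
    have := Finset.card_union_add_card_inter (X ∩ B1) (X ∩ B2)
    rw [hXeq, hXint] at this
    exact_mod_cast this
  have hunion : {e : Finset V | e ∈ E ∧ e ⊆ X}
      = {e : Finset V | e ∈ E ∧ e ⊆ X ∩ B1} ∪ {e : Finset V | e ∈ E ∧ e ⊆ X ∩ B2} := by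
    ext e
    constructor
    · rintro ⟨he, hs⟩
      have hcoe : (↑e : Set V) ⊆ (↑B1 : Set V) ∪ (↑B2 : Set V) := by
        intro v hv
        have := hX (hs hv)
        simpa using Finset.mem_union.1 this
      rcases hfree e he hcoe with h | h
      · exact Or.inl ⟨he, Finset.subset_inter hs (fun v hv => Finset.mem_coe.1 (h hv))⟩
      · exact Or.inr ⟨he, Finset.subset_inter hs (fun v hv => Finset.mem_coe.1 (h hv))⟩
    · rintro (⟨he, hs⟩ | ⟨he, hs⟩)
      · exact ⟨he, hs.trans Finset.inter_subset_left⟩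
      · exact ⟨he, hs.trans Finset.inter_subset_left⟩
  have hint : {e : Finset V | e ∈ E ∧ e ⊆ X ∩ B1} ∩ {e : Finset V | e ∈ E ∧ e ⊆ X ∩ B2}
      = {e : Finset V | e ∈ E ∧ e ⊆ X ∩ B1 ∩ B2} := by
    ext e
    simp only [Set.mem_inter_iff, Set.mem_setOf_eq]
    constructor
    · rintro ⟨⟨he, h1⟩, ⟨_, h2⟩⟩
      exact ⟨he, fun v hv => by
        have := Finset.mem_inter.1 (h1 hv)
        have := Finset.mem_inter.1 (h2 hv)
        simp only [Finset.mem_inter]; tauto⟩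
    · rintro ⟨he, hs⟩
      refine ⟨⟨he, fun v hv => ?_⟩, ⟨he, fun v hv => ?_⟩⟩ <;>
        · have := Finset.mem_inter.1 (hs hv)
          have := Finset.mem_inter.1 this.1
          simp only [Finset.mem_inter]; tauto
  have hn := Set.ncard_union_add_ncard_inter {e : Finset V | e ∈ E ∧ e ⊆ X ∩ B1}
    {e : Finset V | e ∈ E ∧ e ⊆ X ∩ B2} (eset_finite E _) (eset_finite E _)
  rw [hint, ← hunion] at hn
  have hn' : (({e : Finset V | e ∈ E ∧ e ⊆ X}).ncard : ℤ)
      + ({e : Finset V | e ∈ E ∧ e ⊆ X ∩ B1 ∩ B2}).ncard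
      = (({e : Finset V | e ∈ E ∧ e ⊆ X ∩ B1}).ncard : ℤ)
        + ({e : Finset V | e ∈ E ∧ e ⊆ X ∩ B2}).ncard := by exact_mod_cast hn
  unfold hdelta
  linarith

/-- in a free join with the base strong in one side, the other side is strong
in the union, and nonnegativity of δ is preserved. -/
theorem stmt6 [DecidableEq V] (E : Set (Finset V)) (B1 B2 : Finset V)
    (hfree : FreelyJoined E (↑B1 : Set V) (↑B2 : Set V))
    (hstrong : Strong E (B1 ∩ B2) (↑B1 : Set V)) :
    Strong E B2 (↑(B1 ∪ B2) : Set V) ∧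
      ((∀ X ⊆ B1, 0 ≤ hdelta E X) → (∀ X ⊆ B2, 0 ≤ hdelta E X) →
        ∀ X ⊆ B1 ∪ B2, 0 ≤ hdelta E X) := by
  constructor
  · refine ⟨by intro v hv; simp [Finset.mem_union]; right; exact hv, ?_⟩
    intro X hB2X hXsub
    have hX : X ⊆ B1 ∪ B2 := fun v hv => Finset.mem_coe.1 (hXsub (Finset.mem_coe.2 hv))
    have hXB2 : X ∩ B2 = B2 := Finset.inter_eq_right.2 hB2X
    have hA : B1 ∩ B2 ⊆ X ∩ B1 := by
      intro v hv
      have := Finset.mem_inter.1 hv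
      exact Finset.mem_inter.2 ⟨hB2X this.2, this.1⟩
    have hXA : X ∩ B1 ∩ B2 = B1 ∩ B2 := by
      ext v
      simp only [Finset.mem_inter]
      exact ⟨fun h => ⟨h.1.2, h.2⟩, fun h => ⟨⟨hB2X h.2, h.1⟩, h.2⟩⟩
    have heq := free_eq E B1 B2 X hfree hX
    rw [hXB2, hXA] at heq
    have hle := hstrong.2 (X ∩ B1) hA (by
      intro v hv
      exact Finset.mem_coe.2 (Finset.mem_inter.1 (Finset.mem_coe.1 hv)).2)
    linarith
  · intro h1 h2 X hX
    have heq := free_eq E B1 B2 X hfree hX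
    have hsm := submod E (X ∩ B1) (B1 ∩ B2)
    have hYU : (X ∩ B1) ∪ (B1 ∩ B2) ⊆ B1 := by
      intro v hv
      rcases Finset.mem_union.1 hv with h | h
      · exact (Finset.mem_inter.1 h).2
      · exact (Finset.mem_inter.1 h).1
    have hYI : (X ∩ B1) ∩ (B1 ∩ B2) = X ∩ B1 ∩ B2 := by
      ext v; simp only [Finset.mem_inter]; tauto
    have hstr := hstrong.2 ((X ∩ B1) ∪ (B1 ∩ B2)) Finset.subset_union_right
      (fun v hv => Finset.mem_coe.2 (hYU (Finset.mem_coe.1 hv)))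
    rw [hYI] at hsm
    have hx2 := h2 (X ∩ B2) Finset.inter_subset_right
    linarith
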